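/- Let μ be a σ-finite measure on a measurable space X, let p_c, p_u, and p_ref be strictly positive probability densities with respect to μ, let β > 0, and let σ(w) = 1/(1+e^{−w}) denote the sigmoid function. Suppose ∫ p_ref(x)(p_c(x)/p_u(x))^{1/β} dμ(x) is finite and set λ = (∫ p_ref(x)(p_c(x)/p_u(x))^{1/β} dμ(x))^{β} and p*(x) = p_ref(x)·(p_c(x)/p_u(x))^{1/β}·λ^{−1/β}. Then p* is a probability density with respect to μ, and for every strictly positive probability density q with respect to μ, ∫ log σ(β log(q(x)/p_ref(x))) p_c(x) dμ(x) + λ ∫ log σ(−β log(q(x)/p_ref(x))) p_u(x) dμ(x) ≤ ∫ log σ(β log(p*(x)/p_ref(x))) p_c(x) dμ(x) + λ ∫ log σ(−β log(p*(x)/p_ref(x))) p_u(x) dμ(x). -/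

import Mathlib

/-! With `t = β log (q / p_ref)` the integrand is, pointwise, the logistic loss
`p_c · (-log σ t) + λ p_u · (-log σ (-t))`. Since `σ t + σ (-t) = 1`, this is a binary cross
entropy, and Gibbs' inequality shows that it is minimized at `σ t = p_c / (p_c + λ p_u)`, i.e.
at `t = log (p_c / (λ p_u))`, which is exactly the value of `t` at `p*`. Hence `p*` is optimal
pointwise, and so after integration. The choice of `λ` makes `λ^{-1/β}` the reciprocal of
`∫ p_ref (p_c / p_u)^{1/β} dμ`, which normalizes `p*`. -/

open MeasureTheory Real ENNReal

noncomputable def sigmoid (w : ℝ) : ℝ := 1 / (1 + Real.exp (-w))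

lemma sigmoid_eq_real_sigmoid : _root_.sigmoid = Real.sigmoid :=
  funext fun _ => one_div _

namespace Real

lemma sigmoid_log_div {a b : ℝ} (ha : 0 < a) (hb : 0 < b) :
    sigmoid (log (a / b)) = a / (a + b) := by
  rw [sigmoid_def, ← log_inv, inv_div, exp_log (div_pos hb ha)]
  field_simp

lemma mul_log_div_le_sub {c x : ℝ} (hc : 0 < c) (hx : 0 < x) : c * log (x / c) ≤ x - c :=
  calc c * log (x / c) ≤ c * (x / c - 1) := by
        gcongr; exact log_le_sub_one_of_pos (div_pos hx hc)
    _ = x - c := by field_simp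

/-- Gibbs' inequality on two points. -/
lemma mul_log_add_mul_log_le {c u p q : ℝ} (hc : 0 < c) (hu : 0 < u) (hp : 0 < p) (hq : 0 < q)
    (hpq : p + q ≤ 1) :
    c * log p + u * log q ≤ c * log (c / (c + u)) + u * log (u / (c + u)) := by
  have hcu : 0 < c + u := add_pos hc hu
  have log_mul_div {a r : ℝ} (ha : 0 < a) (hr : 0 < r) :
      log (r * (c + u) / a) = log r - log (a / (c + u)) := by
    rw [mul_div_assoc, log_mul hr.ne' (by positivity), ← inv_div, log_inv, sub_eq_add_neg]
  have hcp := mul_log_div_le_sub hc (mul_pos hp hcu)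
  have huq := mul_log_div_le_sub hu (mul_pos hq hcu)
  rw [log_mul_div hc hp] at hcp
  rw [log_mul_div hu hq] at huq
  nlinarith

noncomputable def logisticLoss (c u t : ℝ) : ℝ := c * -log (sigmoid t) + u * -log (sigmoid (-t))

lemma neg_log_sigmoid_nonneg (t : ℝ) : 0 ≤ -log (sigmoid t) :=
  neg_nonneg.2 (log_nonpos (sigmoid_nonneg t) (sigmoid_le_one t))

lemma logisticLoss_log_div_le {c u : ℝ} (hc : 0 < c) (hu : 0 < u) (t : ℝ) :
    logisticLoss c u (log (c / u)) ≤ logisticLoss c u t := by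
  have hgibbs := mul_log_add_mul_log_le hc hu (sigmoid_pos t) (sigmoid_pos (-t))
    (by rw [sigmoid_neg]; linarith)
  rw [logisticLoss, logisticLoss, ← log_inv (c / u), inv_div, sigmoid_log_div hc hu,
    sigmoid_log_div hu hc, add_comm u c]
  linarith

end Real

lemma ENNReal.ofReal_add_ofReal_mul_le {a b a' b' c : ℝ} (ha : 0 ≤ a) (hb : 0 ≤ b) (hc : 0 ≤ c)
    (h : a + c * b ≤ a' + c * b') :
    ENNReal.ofReal a + ENNReal.ofReal c * ENNReal.ofReal b ≤
      ENNReal.ofReal a' + ENNReal.ofReal c * ENNReal.ofReal b' := by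
  rw [← ofReal_mul hc, ← ofReal_mul hc, ← ofReal_add ha (mul_nonneg hc hb)]
  exact (ofReal_le_ofReal h).trans ofReal_add_le

namespace MeasureTheory

variable {α : Type*} [MeasurableSpace α] {μ : Measure α}

lemma lintegral_add_const_mul_le {f g f' g' : α → ℝ≥0∞} {c : ℝ≥0∞} (hc : c ≠ ∞)
    (hf' : AEMeasurable f' μ) (h : ∀ᵐ x ∂μ, f x + c * g x ≤ f' x + c * g' x) :
    ∫⁻ x, f x ∂μ + c * ∫⁻ x, g x ∂μ ≤ ∫⁻ x, f' x ∂μ + c * ∫⁻ x, g' x ∂μ := by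
  rw [← lintegral_const_mul' _ _ hc, ← lintegral_const_mul' _ _ hc, ← lintegral_add_left' hf']
  exact (le_lintegral_add _ _).trans (lintegral_mono_ae h)

lemma integral_pos_of_forall_pos {f : α → ℝ} (hμ : μ ≠ 0) (hf : ∀ x, 0 < f x)
    (hfi : Integrable f μ) : 0 < ∫ x, f x ∂μ := by
  rw [integral_pos_iff_support_of_nonneg (fun x => (hf x).le) hfi,
    Function.support_eq_univ fun x => (hf x).ne', Measure.measure_univ_pos]
  exact hμ

end MeasureTheory

/-- The objective is nonpositive, so it is stated through Lebesgue integrals of the negated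
integrands, with the inequality reversed. -/
theorem cca_optimal_density_general {X : Type*} [MeasurableSpace X]
    (μ : Measure X)
    (pc pu pref : X → ℝ)
    (hpcm : Measurable pc) (hprefm : Measurable pref)
    (hpcpos : ∀ x, 0 < pc x) (hpupos : ∀ x, 0 < pu x) (hprefpos : ∀ x, 0 < pref x)
    (hpc1 : ∫ x, pc x ∂μ = 1)
    (β : ℝ) (hβ : 0 < β)
    (hZint : Integrable (fun x => pref x * (pc x / pu x) ^ (1 / β)) μ)
    (lam : ℝ) (hlam : lam = (∫ x, pref x * (pc x / pu x) ^ (1 / β) ∂μ) ^ β)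
    (pstar : X → ℝ)
    (hpstar : ∀ x, pstar x = pref x * (pc x / pu x) ^ (1 / β) * lam ^ (-(1 / β)))
    (q : X → ℝ) (hqm : Measurable q) :
    ((∀ x, 0 ≤ pstar x) ∧ Integrable pstar μ ∧ ∫ x, pstar x ∂μ = 1) ∧
      ((∫⁻ x, ENNReal.ofReal (pc x *
            (-(Real.log (_root_.sigmoid (β * Real.log (pstar x / pref x)))))) ∂μ
          + ENNReal.ofReal lam *
            ∫⁻ x, ENNReal.ofReal (pu x *
              (-(Real.log (_root_.sigmoid (-(β * Real.log (pstar x / pref x))))))) ∂μ)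
        ≤ (∫⁻ x, ENNReal.ofReal (pc x *
            (-(Real.log (_root_.sigmoid (β * Real.log (q x / pref x)))))) ∂μ
          + ENNReal.ofReal lam *
            ∫⁻ x, ENNReal.ofReal (pu x *
              (-(Real.log (_root_.sigmoid (-(β * Real.log (q x / pref x))))))) ∂μ)) := by
  have hZ : 0 < ∫ x, pref x * (pc x / pu x) ^ (1 / β) ∂μ :=
    integral_pos_of_forall_pos (by rintro rfl; simp at hpc1)
      (fun x => by have := hpcpos x; have := hpupos x; have := hprefpos x; positivity) hZint
  have hlam_pos : 0 < lam := hlam ▸ rpow_pos_of_pos hZ β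
  have hnorm : lam ^ (-(1 / β)) = (∫ x, pref x * (pc x / pu x) ^ (1 / β) ∂μ)⁻¹ := by
    rw [hlam, rpow_neg (rpow_nonneg hZ.le _), ← rpow_mul hZ.le, mul_one_div_cancel hβ.ne', Real.rpow_one]
  have hopt : ∀ x, β * log (pstar x / pref x) = log (pc x / (lam * pu x)) := fun x => by
    have := hpcpos x; have := hpupos x
    rw [hpstar x, rpow_neg hlam_pos.le, ← inv_rpow hlam_pos.le, mul_assoc,
      mul_div_cancel_left₀ _ (hprefpos x).ne', ← mul_rpow (by positivity) (by positivity),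
      log_rpow (by positivity), ← mul_assoc, mul_one_div_cancel hβ.ne', one_mul]
    congr 1
    field_simp
  refine ⟨⟨fun x => ?_, ?_, ?_⟩, ?_⟩
  · have := hpcpos x; have := hpupos x; have := hprefpos x
    rw [hpstar x]; positivity
  · simpa only [← hpstar] using hZint.mul_const (lam ^ (-(1 / β)))
  · simp_rw [hpstar, hnorm, integral_mul_const, mul_inv_cancel₀ hZ.ne']
  rw [sigmoid_eq_real_sigmoid]
  refine lintegral_add_const_mul_le ofReal_ne_top (by fun_prop) (ae_of_all _ fun x => ?_)
  refine ENNReal.ofReal_add_ofReal_mul_le (mul_nonneg (hpcpos x).le (neg_log_sigmoid_nonneg _))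
    (mul_nonneg (hpupos x).le (neg_log_sigmoid_nonneg _)) hlam_pos.le ?_
  simpa only [logisticLoss, hopt, mul_assoc] using
    logisticLoss_log_div_le (hpcpos x) (mul_pos hlam_pos (hpupos x)) (β * log (q x / pref x))

/-- **CCA with the normalizing choice of λ (equivalence of CCA and CC-DPO).**
With `λ = (∫ p_ref (p_c/p_u)^{1/β} dμ)^β` the gamma-powered distribution
`p* = p_ref (p_c/p_u)^{1/β} λ^{-1/β}` is a probability density, and it maximizes the
λ-weighted NCE objective `∫ log σ(β log(q/p_ref)) p_c dμ + λ ∫ log σ(−β log(q/p_ref)) p_u dμ`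
over strictly positive probability densities `q`.  Since the integrands are
nonpositive, the objective is stated via Lebesgue integrals of their negations,
reversed. -/
theorem cca_optimal_density {X : Type*} [MeasurableSpace X]
    (μ : Measure X) [SigmaFinite μ]
    (pc pu pref : X → ℝ)
    (hpcm : Measurable pc) (hpum : Measurable pu) (hprefm : Measurable pref)
    (hpcpos : ∀ x, 0 < pc x) (hpupos : ∀ x, 0 < pu x) (hprefpos : ∀ x, 0 < pref x)
    (hpci : Integrable pc μ) (hpui : Integrable pu μ) (hprefi : Integrable pref μ)
    (hpc1 : ∫ x, pc x ∂μ = 1) (hpu1 : ∫ x, pu x ∂μ = 1) (hpref1 : ∫ x, pref x ∂μ = 1)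
    (β : ℝ) (hβ : 0 < β)
    (hZint : Integrable (fun x => pref x * (pc x / pu x) ^ (1 / β)) μ)
    (lam : ℝ) (hlam : lam = (∫ x, pref x * (pc x / pu x) ^ (1 / β) ∂μ) ^ β)
    (pstar : X → ℝ)
    (hpstar : ∀ x, pstar x = pref x * (pc x / pu x) ^ (1 / β) * lam ^ (-(1 / β)))
    (q : X → ℝ) (hqm : Measurable q) (hqpos : ∀ x, 0 < q x)
    (hqi : Integrable q μ) (hq1 : ∫ x, q x ∂μ = 1) :
    ((∀ x, 0 ≤ pstar x) ∧ Integrable pstar μ ∧ ∫ x, pstar x ∂μ = 1) ∧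
      ((∫⁻ x, ENNReal.ofReal (pc x *
            (-(Real.log (_root_.sigmoid (β * Real.log (pstar x / pref x)))))) ∂μ
          + ENNReal.ofReal lam *
            ∫⁻ x, ENNReal.ofReal (pu x *
              (-(Real.log (_root_.sigmoid (-(β * Real.log (pstar x / pref x))))))) ∂μ)
        ≤ (∫⁻ x, ENNReal.ofReal (pc x *
            (-(Real.log (_root_.sigmoid (β * Real.log (q x / pref x)))))) ∂μ
          + ENNReal.ofReal lam *
            ∫⁻ x, ENNReal.ofReal (pu x *
              (-(Real.log (_root_.sigmoid (-(β * Real.log (q x / pref x))))))) ∂μ)) :=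
  cca_optimal_density_general μ pc pu pref hpcm hprefm hpcpos hpupos hprefpos hpc1 β hβ hZint lam
    hlam pstar hpstar q hqm
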